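/- Let T be a positive integer and for each t in [T] let n_{i,t}, n_{j,t} be positive reals and r_{i,t}, r_{j,t} nonnegative reals with daily empirical means μ̂_{i,t} = r_{i,t}/n_{i,t} and μ̂_{j,t} = r_{j,t}/n_{j,t}. Let p_{i,t}, p_{j,t} > 0 be the sampling probabilities and define Ĝ_{i,T} = Σ_t r_{i,t}/p_{i,t} and Ĝ_{j,T} = Σ_t r_{j,t}/p_{j,t}. If on each day t the conditional expectations satisfy n_{i,t} = n_t p_{i,t} and n_{j,t} = n_t p_{j,t} for common daily traffic n_t > 0, and μ̂_{i,t} > μ̂_{j,t} for all t ∈ [T], then Ĝ_{i,T} ≥ Ĝ_{j,T}. -/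

import Mathlib

theorem div_eq_mul_div_mul_left {K : Type*} [Field K] (a b : K) {c : K} (hc : c ≠ 0) :
    a / b = c * (a / (c * b)) := by
  rw [← mul_div_assoc, mul_div_mul_left a b hc]

theorem Finset.sum_div_le_sum_div_of_mean_le {ι K : Type*} [Field K] [LinearOrder K]
    [IsStrictOrderedRing K] (s : Finset ι) {n r r' p p' : ι → K} (hn : ∀ t ∈ s, 0 < n t)
    (hmean : ∀ t ∈ s, r' t / (n t * p' t) ≤ r t / (n t * p t)) :
    ∑ t ∈ s, r' t / p' t ≤ ∑ t ∈ s, r t / p t := by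
  refine Finset.sum_le_sum fun t ht => ?_
  have hnt : n t ≠ 0 := (hn t ht).ne'
  rw [div_eq_mul_div_mul_left (r' t) _ hnt, div_eq_mul_div_mul_left (r t) _ hnt]
  exact mul_le_mul_of_nonneg_left (hmean t ht) (hn t ht).le

theorem cumulative_gain_no_simpson_general
    (T : ℕ)
    (ni nj : Fin T → ℝ) (ri rj : Fin T → ℝ) (pi pj : Fin T → ℝ) (n : Fin T → ℝ)
    (hn : ∀ t, 0 < n t)
    (hexpi : ∀ t, ni t = n t * pi t) (hexpj : ∀ t, nj t = n t * pj t)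
    (hdaily : ∀ t, ri t / ni t > rj t / nj t) :
    ∑ t, ri t / pi t ≥ ∑ t, rj t / pj t :=
  Finset.univ.sum_div_le_sum_div_of_mean_le (fun t _ => hn t) fun t _ => by
    simpa only [hexpi, hexpj] using (hdaily t).le

/-- The cumulative gain estimator never exhibits Simpson's paradox: if arm `i`
has a strictly higher daily empirical mean than arm `j` on every day, then its
cumulative gain estimate is at least as large. -/
theorem cumulative_gain_no_simpson
    (T : ℕ) (hT : 0 < T)
    (ni nj : Fin T → ℝ) (ri rj : Fin T → ℝ) (pi pj : Fin T → ℝ) (n : Fin T → ℝ)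
    (hni : ∀ t, 0 < ni t) (hnj : ∀ t, 0 < nj t)
    (hri : ∀ t, 0 ≤ ri t) (hrj : ∀ t, 0 ≤ rj t)
    (hpi : ∀ t, 0 < pi t) (hpj : ∀ t, 0 < pj t)
    (hn : ∀ t, 0 < n t)
    (hexpi : ∀ t, ni t = n t * pi t) (hexpj : ∀ t, nj t = n t * pj t)
    (hdaily : ∀ t, ri t / ni t > rj t / nj t) :
    ∑ t, ri t / pi t ≥ ∑ t, rj t / pj t :=
  cumulative_gain_no_simpson_general T ni nj ri rj pi pj n hn hexpi hexpj hdaily
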